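/- Fix an integer a ≥ 2 and let p/q ∈ (0, a) be a rational number whose canonical continued fraction expansion is [a_0; a_1, …, a_n] with every partial quotient a_i ≤ a − 1. Then the locking zone Z_a(p/q) is exactly the closed interval whose two endpoints are ν^σ = [a_0; a_1, …, a_n, a] and ν^{−σ} = [a_0; a_1, …, a_n − 1, 1, a], where σ = + if n is even and σ = − if n is odd (that is, [a_0; a_1, …, a_n, a] is the right endpoint ν^+(p/q) precisely when n is even, and the left endpoint ν^−(p/q) when n is odd). In particular r_a(x) = p/q for every x in this closed interval. -/

import Mathlib

/-- One step of the Gauss continued-fraction algorithm (returns `0` upon termination). -/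
noncomputable def cfStep (y : ℝ) : ℝ := if Int.fract y = 0 then 0 else (Int.fract y)⁻¹

/-- Iterates of the Gauss map used to compute the canonical continued fraction of `x`. -/
noncomputable def cfIter (x : ℝ) : ℕ → ℝ
  | 0 => x
  | n + 1 => cfStep (cfIter x n)

/-- The `n`-th partial quotient of the canonical continued fraction expansion of `x`
(by convention it is `0` past the end of a finite expansion). -/
noncomputable def pquot (x : ℝ) (n : ℕ) : ℤ := ⌊cfIter x n⌋

/-- Value of a finite continued fraction `[a₀; a₁, …, aₙ]`. -/
noncomputable def cfEval : List ℤ → ℝ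
  | [] => 0
  | [a] => (a : ℝ)
  | a :: l => (a : ℝ) + (cfEval l)⁻¹

/-- The canonical continued fraction expansion of `x` is exactly `[A 0; A 1, …, A n]`. -/
def IsCanonCF (x : ℝ) (A : ℕ → ℤ) (n : ℕ) : Prop :=
  (∀ i ≤ n, pquot x i = A i) ∧ Int.fract (cfIter x n) = 0 ∧ ∀ i < n, Int.fract (cfIter x i) ≠ 0

/-- The `n`-th convergent `pₙ/qₙ = [x₀; x₁, …, xₙ]` of `x`. -/
noncomputable def cfConv (x : ℝ) (n : ℕ) : ℝ := cfEval ((List.range (n + 1)).map (pquot x))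

open scoped Classical in
/-- The resolution map `r_a`: truncate the canonical continued fraction expansion just
before the first partial quotient `xᵢ` (`i ≥ 1`) with `xᵢ ≥ a`; identity otherwise. -/
noncomputable def ra (a : ℕ) (x : ℝ) : ℝ :=
  if h : ∃ i, 1 ≤ i ∧ (a : ℤ) ≤ pquot x i then
    cfEval ((List.range (Nat.find h)).map (pquot x))
  else x

/-- The locking zone `Z_a(r) = {x ∈ [0, a) : r_a(x) = r}`. -/
noncomputable def lockZone (a : ℕ) (r : ℝ) : Set ℝ :=
  {x | x ∈ Set.Ico (0 : ℝ) (a : ℝ) ∧ ra a x = r}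

/-- Right boundary `ν⁺` of a locking zone. -/
noncomputable def nuPlus (a : ℕ) (r : ℝ) : ℝ := sSup (lockZone a r)

/-- Left boundary `ν⁻` of a locking zone. -/
noncomputable def nuMinus (a : ℕ) (r : ℝ) : ℝ := sInf (lockZone a r)

/-!
Write `[b₀; b₁, …, bₖ, t]` for a continued fraction with positive integers `b₁, …, bₖ` and a
real last entry `t > 1`. Its first partial quotients are `b₀, …, bₖ` and its `(k+1)`-st Gauss
iterate is `t`, so for `t ≥ a > b₁, …, bₖ` the resolution map sends it to `[b₀; …, bₖ]`.
As `t` runs over `[a, ∞)` it sweeps the interval between `[b₀; …, bₖ, a]` and `[b₀; …, bₖ]`,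
the latter excluded, on the side determined by the parity of `k`.

Conversely, if `r_a(y) = p/q` then `y = [y₀; …, y_{k-1}, t]` with `t ≥ a` and
`[y₀; …, y_{k-1}] = p/q`, so by uniqueness of canonical expansions `(y₀, …, y_{k-1})` is either
`(a₀, …, aₙ)` or `(a₀, …, aₙ - 1, 1)`. These two lists have lengths of opposite parity, so their
two half-open intervals lie on opposite sides of `p/q` and together with it form the closed
interval between `[a₀; …, aₙ, a]` and `[a₀; …, aₙ - 1, 1, a]`.
-/

open Set

/-- `cfEvalTail [b₀, …, bₖ] t = [b₀; b₁, …, bₖ, t]`. -/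
noncomputable def cfEvalTail : List ℤ → ℝ → ℝ
  | [], t => t
  | b :: l, t => b + (cfEvalTail l t)⁻¹

@[simp] lemma cfEvalTail_nil (t : ℝ) : cfEvalTail [] t = t := rfl

@[simp] lemma cfEvalTail_cons (b : ℤ) (l : List ℤ) (t : ℝ) :
    cfEvalTail (b :: l) t = b + (cfEvalTail l t)⁻¹ := rfl

lemma cfEval_cons (b : ℤ) {l : List ℤ} (hl : l ≠ []) : cfEval (b :: l) = b + (cfEval l)⁻¹ := by
  cases l with
  | nil => exact absurd rfl hl
  | cons c m => rfl

lemma cfEvalTail_append (P Q : List ℤ) (t : ℝ) :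
    cfEvalTail (P ++ Q) t = cfEvalTail P (cfEvalTail Q t) := by
  induction P with
  | nil => rfl
  | cons b l ih => simp [ih]

lemma cfEval_append_singleton (P : List ℤ) (c : ℤ) : cfEval (P ++ [c]) = cfEvalTail P c := by
  induction P with
  | nil => rfl
  | cons b l ih => rw [List.cons_append, cfEval_cons _ (by simp), ih, cfEvalTail_cons]

lemma cfEval_append_pair_one (P : List ℤ) (c : ℤ) :
    cfEval (P ++ [c, 1]) = cfEval (P ++ [c + 1]) := by
  rw [show P ++ [c, 1] = (P ++ [c]) ++ [1] by simp, cfEval_append_singleton,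
    cfEval_append_singleton, cfEvalTail_append]
  simp

lemma cfEvalTail_pos {l : List ℤ} (hl : ∀ c ∈ l, 1 ≤ c) {t : ℝ} (ht : 0 < t) :
    0 < cfEvalTail l t := by
  induction l with
  | nil => exact ht
  | cons b l ih =>
    have hb : (1 : ℝ) ≤ b := by exact_mod_cast hl b (by simp)
    have := ih fun c hc => hl c (by simp [hc])
    rw [cfEvalTail_cons]; positivity

lemma one_lt_cfEvalTail {l : List ℤ} (hl : ∀ c ∈ l, 1 ≤ c) {t : ℝ} (ht : 1 < t) :
    1 < cfEvalTail l t := by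
  cases l with
  | nil => exact ht
  | cons b l =>
    have hb : (1 : ℝ) ≤ b := by exact_mod_cast hl b (by simp)
    have := cfEvalTail_pos (fun c hc => hl c (List.mem_cons_of_mem b hc)) (zero_lt_one.trans ht)
    rw [cfEvalTail_cons]; linarith [inv_pos.2 this]

lemma cfEval_pos {l : List ℤ} (hl : ∀ c ∈ l, 1 ≤ c) (hne : l ≠ []) : 0 < cfEval l := by
  obtain ⟨P, c, rfl⟩ := (List.eq_nil_or_concat' l).resolve_left hne
  have hc : (1 : ℝ) ≤ c := by exact_mod_cast hl c (by simp)
  rw [cfEval_append_singleton]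
  exact cfEvalTail_pos (fun d hd => hl d (by simp [hd])) (by linarith)

lemma inv_mem_uIcc_inv {α : Type*} [Field α] [LinearOrder α] [IsStrictOrderedRing α]
    {u w x : α} (hu : 0 < u) (hw : 0 < w) (hx : x ∈ uIcc u w) : x⁻¹ ∈ uIcc u⁻¹ w⁻¹ := by
  rcases mem_uIcc.1 hx with ⟨h₁, h₂⟩ | ⟨h₁, h₂⟩
  · exact mem_uIcc.2 (Or.inr ⟨inv_anti₀ (hu.trans_le h₁) h₂, inv_anti₀ hu h₁⟩)
  · exact mem_uIcc.2 (Or.inl ⟨inv_anti₀ (hw.trans_le h₁) h₂, inv_anti₀ hw h₁⟩)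

section Cylinder

variable {b : ℤ} {l : List ℤ} {s t y : ℝ}

lemma cfEvalTail_cons_mem_uIcc (hl : ∀ c ∈ l, 1 ≤ c) (hs : 0 < s) (hst : s ≤ t) :
    cfEvalTail (b :: l) t ∈ uIcc (cfEval (b :: l)) (cfEvalTail (b :: l) s) := by
  induction l generalizing b with
  | nil =>
    simp only [cfEvalTail_cons, cfEvalTail_nil, cfEval]
    exact mem_uIcc.2 (Or.inl ⟨by linarith [inv_pos.2 (hs.trans_le hst)],
      by linarith [inv_anti₀ hs hst]⟩)
  | cons c l ih =>
    have hl' : ∀ d ∈ l, 1 ≤ d := fun d hd => hl d (by simp [hd])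
    have hmem := inv_mem_uIcc_inv (cfEval_pos hl (by simp)) (cfEvalTail_pos hl hs)
      (ih (b := c) hl')
    rw [cfEval_cons _ (by simp), cfEvalTail_cons, cfEvalTail_cons b]
    rw [← image_const_add_uIcc]
    exact mem_image_of_mem _ hmem

lemma cfEvalTail_cons_ne_cfEval_cons (hl : ∀ c ∈ l, 1 ≤ c) (ht : 0 < t) :
    cfEvalTail (b :: l) t ≠ cfEval (b :: l) := by
  induction l generalizing b with
  | nil => simpa [cfEval] using (inv_pos.2 ht).ne'
  | cons c l ih =>
    rw [cfEval_cons _ (by simp), cfEvalTail_cons b, Ne, add_right_inj, inv_inj]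
    exact ih fun d hd => hl d (by simp [hd])

lemma exists_cfEvalTail_cons_eq (hl : ∀ c ∈ l, 1 ≤ c) (hs : 0 < s)
    (hy : y ∈ uIcc (cfEval (b :: l)) (cfEvalTail (b :: l) s)) (hne : y ≠ cfEval (b :: l)) :
    ∃ t, s ≤ t ∧ cfEvalTail (b :: l) t = y := by
  induction l generalizing b y with
  | nil =>
    simp only [cfEvalTail_cons, cfEvalTail_nil, cfEval] at hy hne
    rw [uIcc_of_le (by linarith [inv_pos.2 hs])] at hy
    have hpos : 0 < y - b := sub_pos.2 (lt_of_le_of_ne hy.1 (Ne.symm hne))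
    have hle : y - b ≤ s⁻¹ := by linarith [hy.2]
    refine ⟨(y - b)⁻¹, ?_, by simp⟩
    simpa using inv_anti₀ hpos hle
  | cons c l ih =>
    have hl' : ∀ d ∈ l, 1 ≤ d := fun d hd => hl d (by simp [hd])
    have he := cfEval_pos hl (by simp)
    have hf := cfEvalTail_pos hl hs
    rw [cfEval_cons _ (by simp), cfEvalTail_cons b, ← image_const_add_uIcc] at hy
    rw [cfEval_cons _ (by simp)] at hne
    obtain ⟨z, hz, rfl⟩ := hy
    have hz₀ : 0 < z := by
      rcases mem_uIcc.1 hz with ⟨h₁, -⟩ | ⟨h₁, -⟩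
      · exact (inv_pos.2 he).trans_le h₁
      · exact (inv_pos.2 hf).trans_le h₁
    have hz' := inv_mem_uIcc_inv (inv_pos.2 he) (inv_pos.2 hf) hz
    rw [inv_inv, inv_inv] at hz'
    obtain ⟨t, hst, ht⟩ := ih hl' hz' fun h => hne (by rw [← h, inv_inv])
    exact ⟨t, hst, by rw [cfEvalTail_cons, ht, inv_inv]⟩

end Cylinder

lemma cfEvalTail_image_Ici {M : List ℤ} (hne : M ≠ []) (hM : ∀ c ∈ M.tail, 1 ≤ c) {s : ℝ}
    (hs : 0 < s) : cfEvalTail M '' Ici s = uIcc (cfEval M) (cfEvalTail M s) \ {cfEval M} := by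
  obtain ⟨b, l, rfl⟩ := List.exists_cons_of_ne_nil hne
  ext y
  constructor
  · rintro ⟨t, ht, rfl⟩
    exact ⟨cfEvalTail_cons_mem_uIcc hM hs ht, cfEvalTail_cons_ne_cfEval_cons hM (hs.trans_le ht)⟩
  · rintro ⟨hy, hne⟩
    exact exists_cfEvalTail_cons_eq hM hs hy hne

lemma cfEval_lt_cfEvalTail_iff {M : List ℤ} (hne : M ≠ []) (hM : ∀ c ∈ M.tail, 1 ≤ c) {t : ℝ}
    (ht : 0 < t) : cfEval M < cfEvalTail M t ↔ Odd M.length := by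
  obtain ⟨b, l, rfl⟩ := List.exists_cons_of_ne_nil hne
  clear hne
  induction l generalizing b with
  | nil => simpa [cfEval] using inv_pos.2 ht
  | cons c l ih =>
    have hl : ∀ d ∈ l, 1 ≤ d := fun d hd => hM d (by simp [hd])
    have hlt : cfEvalTail (c :: l) t < cfEval (c :: l) ↔ ¬Odd (c :: l).length := by
      rw [← ih c hl, not_lt]
      exact (le_iff_lt_or_eq.trans (or_iff_left (cfEvalTail_cons_ne_cfEval_cons hl ht))).symm
    rw [cfEval_cons _ (by simp), cfEvalTail_cons b, add_lt_add_iff_left,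
      inv_lt_inv₀ (cfEval_pos (l := c :: l) hM (by simp)) (cfEvalTail_pos (l := c :: l) hM ht), hlt]
    simp only [List.length_cons, Nat.odd_add_one, not_not]

section GaussMap

lemma fract_intCast_add_inv (b : ℤ) {u : ℝ} (hu : 1 < u) : Int.fract ((b : ℝ) + u⁻¹) = u⁻¹ := by
  rw [Int.fract_intCast_add, Int.fract_eq_self]
  exact ⟨(inv_pos.2 (zero_lt_one.trans hu)).le, inv_lt_one_of_one_lt₀ hu⟩

lemma floor_intCast_add_inv (b : ℤ) {u : ℝ} (hu : 1 < u) : ⌊(b : ℝ) + u⁻¹⌋ = b := by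
  have h := Int.floor_add_fract ((b : ℝ) + u⁻¹)
  rw [fract_intCast_add_inv b hu, add_left_inj] at h
  exact_mod_cast h

lemma cfStep_intCast_add_inv (b : ℤ) {u : ℝ} (hu : 1 < u) : cfStep ((b : ℝ) + u⁻¹) = u := by
  rw [cfStep, fract_intCast_add_inv b hu, if_neg (inv_ne_zero (by linarith)), inv_inv]

variable {M : List ℤ} {t : ℝ}

lemma one_lt_cfEvalTail_drop (hM : ∀ c ∈ M.tail, 1 ≤ c) (ht : 1 < t) (i : ℕ) :
    1 < cfEvalTail (M.drop (i + 1)) t := by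
  refine one_lt_cfEvalTail (fun c hc => hM c ?_) ht
  rw [← List.drop_tail] at hc
  exact List.mem_of_mem_drop hc

lemma cfIter_cfEvalTail (hM : ∀ c ∈ M.tail, 1 ≤ c) (ht : 1 < t) {i : ℕ} (hi : i ≤ M.length) :
    cfIter (cfEvalTail M t) i = cfEvalTail (M.drop i) t := by
  induction i with
  | zero => rfl
  | succ i ih =>
    rw [cfIter, ih (by omega), List.drop_eq_getElem_cons (by omega), cfEvalTail_cons,
      cfStep_intCast_add_inv _ (one_lt_cfEvalTail_drop hM ht i)]

lemma cfIter_cfEvalTail_of_lt (hM : ∀ c ∈ M.tail, 1 ≤ c) (ht : 1 < t) {i : ℕ}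
    (hi : i < M.length) :
    cfIter (cfEvalTail M t) i = M[i] + (cfEvalTail (M.drop (i + 1)) t)⁻¹ := by
  rw [cfIter_cfEvalTail hM ht hi.le, List.drop_eq_getElem_cons hi, cfEvalTail_cons]

lemma pquot_cfEvalTail (hM : ∀ c ∈ M.tail, 1 ≤ c) (ht : 1 < t) {i : ℕ} (hi : i < M.length) :
    pquot (cfEvalTail M t) i = M[i] := by
  rw [pquot, cfIter_cfEvalTail_of_lt hM ht hi,
    floor_intCast_add_inv _ (one_lt_cfEvalTail_drop hM ht i)]

lemma fract_cfIter_cfEvalTail_ne_zero (hM : ∀ c ∈ M.tail, 1 ≤ c) (ht : 1 < t) {i : ℕ}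
    (hi : i < M.length) : Int.fract (cfIter (cfEvalTail M t) i) ≠ 0 := by
  have hu := one_lt_cfEvalTail_drop hM ht i
  rw [cfIter_cfEvalTail_of_lt hM ht hi, fract_intCast_add_inv _ hu]
  exact inv_ne_zero (by linarith)

lemma cfIter_cfEvalTail_length (hM : ∀ c ∈ M.tail, 1 ≤ c) (ht : 1 < t) :
    cfIter (cfEvalTail M t) M.length = t := by
  rw [cfIter_cfEvalTail hM ht le_rfl, List.drop_length, cfEvalTail_nil]

lemma floor_cfEvalTail {M : List ℤ} (hM : ∀ c ∈ M.tail, 1 ≤ c) {t : ℝ} (ht : 1 < t)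
    (hne : 0 < M.length) : ⌊cfEvalTail M t⌋ = M[0] :=
  pquot_cfEvalTail hM ht hne

variable {y : ℝ}

lemma cfIter_succ_of_fract_ne_zero {i : ℕ} (h : Int.fract (cfIter y i) ≠ 0) :
    cfIter y (i + 1) = (Int.fract (cfIter y i))⁻¹ := by
  rw [cfIter, cfStep, if_neg h]

lemma one_lt_cfIter_succ {i : ℕ} (h : Int.fract (cfIter y i) ≠ 0) : 1 < cfIter y (i + 1) := by
  rw [cfIter_succ_of_fract_ne_zero h]
  exact one_lt_inv_iff₀.2 ⟨lt_of_le_of_ne (Int.fract_nonneg _) (Ne.symm h), Int.fract_lt_one _⟩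

lemma cfIter_eq_zero_of_fract_eq_zero {j i : ℕ} (h : Int.fract (cfIter y j) = 0) (hji : j < i) :
    cfIter y i = 0 := by
  induction i with
  | zero => omega
  | succ i ih =>
    rcases Nat.lt_succ_iff_lt_or_eq.1 hji with hji | rfl
    · rw [cfIter, ih hji, cfStep, if_pos (by simp)]
    · rw [cfIter, cfStep, if_pos h]

lemma cfEvalTail_map_range_pquot {k : ℕ} (h : ∀ i < k, Int.fract (cfIter y i) ≠ 0) :
    cfEvalTail ((List.range k).map (pquot y)) (cfIter y k) = y := by
  induction k with
  | zero => rfl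
  | succ k ih =>
    rw [List.range_succ, List.map_append, cfEvalTail_append, List.map_singleton,
      cfEvalTail_cons, cfEvalTail_nil, cfIter_succ_of_fract_ne_zero (h k (by omega)), inv_inv,
      pquot, Int.floor_add_fract]
    exact ih fun i hi => h i (by omega)

end GaussMap
section ExpansionLists

def cfList (A : ℕ → ℤ) (n : ℕ) : List ℤ := (List.range (n + 1)).map A

def cfListAlt (A : ℕ → ℤ) (n : ℕ) : List ℤ := (List.range n).map A ++ [A n - 1, 1]

variable {A B : ℕ → ℤ} {n : ℕ}

@[simp] lemma length_cfList : (cfList A n).length = n + 1 := by simp [cfList]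

@[simp] lemma getElem_cfList {i : ℕ} (hi : i < (cfList A n).length) : (cfList A n)[i] = A i := by
  simp [cfList]

lemma cfList_ne_nil : cfList A n ≠ [] := by simp [cfList]

lemma cfList_eq_append : cfList A n = (List.range n).map A ++ [A n] := by
  simp [cfList, List.range_succ]

lemma cfList_congr (h : ∀ i ≤ n, A i = B i) : cfList A n = cfList B n :=
  List.map_congr_left fun i hi => h i (Nat.lt_succ_iff.1 (List.mem_range.1 hi))

lemma forall_mem_tail_cfList {p : ℤ → Prop} (h : ∀ i, 1 ≤ i → i ≤ n → p (A i)) :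
    ∀ c ∈ (cfList A n).tail, p c := by
  simp only [cfList, List.range_succ_eq_map, List.map_cons, List.tail_cons, List.map_map,
    List.mem_map, List.mem_range, Function.comp, forall_exists_index, and_imp]
  rintro _ i hi rfl
  exact h (i + 1) (by omega) (by omega)

lemma cfListAlt_ne_nil : cfListAlt A n ≠ [] := by simp [cfListAlt]

@[simp] lemma length_cfListAlt : (cfListAlt A n).length = n + 2 := by simp [cfListAlt]

lemma cfEval_cfListAlt : cfEval (cfListAlt A n) = cfEval (cfList A n) := by
  rw [cfListAlt, cfEval_append_pair_one, sub_add_cancel, cfList_eq_append]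

lemma forall_mem_tail_cfListAlt {p : ℤ → Prop} (h₁ : p 1) (h₂ : 1 ≤ n → p (A n - 1))
    (h : ∀ i, 1 ≤ i → i < n → p (A i)) : ∀ c ∈ (cfListAlt A n).tail, p c := by
  cases n with
  | zero => simpa [cfListAlt] using h₁
  | succ n =>
    simp only [cfListAlt, List.range_succ_eq_map, List.map_cons, List.cons_append, List.tail_cons,
      List.map_map, List.mem_append, List.mem_map, List.mem_range, Function.comp,
      List.mem_cons, List.not_mem_nil, or_false]
    rintro c ((⟨i, hi, rfl⟩) | rfl | rfl)
    · exact h (i + 1) (by omega) (by omega)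
    · exact h₂ (by omega)
    · exact h₁

end ExpansionLists

lemma ra_cfEvalTail {a : ℕ} (ha : 2 ≤ a) {M : List ℤ} (hne : M ≠ [])
    (hM : ∀ c ∈ M.tail, 1 ≤ c ∧ c < a) {t : ℝ} (ht : (a : ℝ) ≤ t) :
    ra a (cfEvalTail M t) = cfEval M := by
  have ht₁ : (1 : ℝ) < t := by
    have : (2 : ℝ) ≤ a := by exact_mod_cast ha
    linarith
  have hM₁ : ∀ c ∈ M.tail, 1 ≤ c := fun c hc => (hM c hc).1
  have hlen : 1 ≤ M.length := List.length_pos_iff_ne_nil.2 hne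
  have hlast : (a : ℤ) ≤ pquot (cfEvalTail M t) M.length := by
    rw [pquot, cfIter_cfEvalTail_length hM₁ ht₁]
    exact Int.le_floor.2 (by exact_mod_cast ht)
  have hex : ∃ i, 1 ≤ i ∧ (a : ℤ) ≤ pquot (cfEvalTail M t) i := ⟨_, hlen, hlast⟩
  have hfind : Nat.find hex = M.length := by
    refine (Nat.find_eq_iff hex).2 ⟨⟨hlen, hlast⟩, fun j hj ⟨hj₁, hja⟩ => ?_⟩
    rw [pquot_cfEvalTail hM₁ ht₁ hj] at hja
    obtain ⟨b, l, rfl⟩ := List.exists_cons_of_ne_nil hne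
    obtain ⟨j, rfl⟩ : ∃ j', j = j' + 1 := ⟨j - 1, by omega⟩
    rw [List.getElem_cons_succ] at hja
    exact (hM _ (List.getElem_mem _)).2.not_ge hja
  rw [ra, dif_pos hex, hfind]
  congr 1
  refine List.ext_getElem (by simp) fun i hi _ => ?_
  simp only [List.getElem_map, List.getElem_range]
  exact pquot_cfEvalTail hM₁ ht₁ (by simpa using hi)

lemma ra_eq_of_mem_uIcc {a : ℕ} (ha : 2 ≤ a) {M : List ℤ} (hne : M ≠ [])
    (hM : ∀ c ∈ M.tail, 1 ≤ c ∧ c < a) {y : ℝ} (hy : y ∈ uIcc (cfEval M) (cfEvalTail M a))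
    (hyM : y ≠ cfEval M) : ra a y = cfEval M := by
  have ha₀ : (0 : ℝ) < a := by exact_mod_cast (by omega : 0 < a)
  obtain ⟨t, ht, rfl⟩ : y ∈ cfEvalTail M '' Ici (a : ℝ) := by
    rw [cfEvalTail_image_Ici hne (fun c hc => (hM c hc).1) ha₀]
    exact ⟨hy, hyM⟩
  exact ra_cfEvalTail ha hne hM ht

lemma ra_eq_self_or_exists {a : ℕ} (ha : 0 < a) (y : ℝ) :
    ra a y = y ∨ ∃ m, (∀ i, 1 ≤ i → i ≤ m → 1 ≤ pquot y i) ∧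
      ra a y = cfEval (cfList (pquot y) m) ∧
      y ∈ cfEvalTail (cfList (pquot y) m) '' Ici (a : ℝ) := by
  by_cases hex : ∃ i, 1 ≤ i ∧ (a : ℤ) ≤ pquot y i
  · right
    obtain ⟨hk₁, hka⟩ := Nat.find_spec hex
    obtain ⟨m, hm⟩ : ∃ m, Nat.find hex = m + 1 := ⟨Nat.find hex - 1, by omega⟩
    rw [hm] at hka
    have hfract : ∀ i < m + 1, Int.fract (cfIter y i) ≠ 0 := fun i hi h₀ => by
      rw [pquot, cfIter_eq_zero_of_fract_eq_zero h₀ hi, Int.floor_zero] at hka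
      omega
    refine ⟨m, fun i hi₁ him => ?_, by rw [ra, dif_pos hex, hm]; rfl,
      cfIter y (m + 1), ?_, cfEvalTail_map_range_pquot hfract⟩
    · obtain ⟨j, rfl⟩ : ∃ j, i = j + 1 := ⟨i - 1, by omega⟩
      exact Int.le_floor.2 (by exact_mod_cast (one_lt_cfIter_succ (hfract j (by omega))).le)
    · exact_mod_cast (Int.le_floor.1 hka)
  · exact Or.inl (by rw [ra, dif_neg hex])

lemma isCanonCF_cfEval_cfList {B : ℕ → ℤ} {n : ℕ} (h₁ : ∀ i, 1 ≤ i → i ≤ n → 1 ≤ B i)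
    (h₂ : 1 ≤ n → 2 ≤ B n) : IsCanonCF (cfEval (cfList B n)) B n := by
  cases n with
  | zero =>
    refine ⟨fun i hi => ?_, by simp [cfIter, cfEval, cfList],
      fun i hi => absurd hi (Nat.not_lt_zero _)⟩
    obtain rfl : i = 0 := by omega
    simp [pquot, cfIter, cfEval, cfList]
  | succ n =>
    have hM : ∀ c ∈ (cfList B n).tail, 1 ≤ c :=
      forall_mem_tail_cfList fun i hi₁ hi => h₁ i hi₁ (by omega)
    have ht : (1 : ℝ) < B (n + 1) := by exact_mod_cast (h₂ (by omega))
    have hend : cfIter (cfEvalTail (cfList B n) (B (n + 1))) (n + 1) = B (n + 1) := by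
      simpa only [length_cfList] using cfIter_cfEvalTail_length hM ht
    rw [cfList_eq_append, cfEval_append_singleton, ← cfList]
    refine ⟨fun i hi => ?_, ?_,
      fun i hi => fract_cfIter_cfEvalTail_ne_zero hM ht (by simpa using hi)⟩
    · rcases hi.lt_or_eq with hi | rfl
      · rw [pquot_cfEvalTail hM ht (by simpa using hi), getElem_cfList]
      · rw [pquot, hend, Int.floor_intCast]
    · rw [hend, Int.fract_intCast]

namespace IsCanonCF

variable {x : ℝ} {A : ℕ → ℤ} {n : ℕ}

lemma unique {B : ℕ → ℤ} {m : ℕ} (hA : IsCanonCF x A n) (hB : IsCanonCF x B m) :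
    n = m ∧ ∀ i ≤ n, A i = B i := by
  obtain rfl : n = m :=
    le_antisymm (not_lt.1 fun h => hA.2.2 m h hB.2.1) (not_lt.1 fun h => hB.2.2 n h hA.2.1)
  exact ⟨rfl, fun i hi => (hA.1 i hi).symm.trans (hB.1 i hi)⟩

lemma cfIter_eq (hA : IsCanonCF x A n) : cfIter x n = A n := by
  have h := Int.floor_add_fract (cfIter x n)
  rw [hA.2.1, add_zero] at h
  rw [← h]
  exact_mod_cast hA.1 n le_rfl

lemma one_le (hA : IsCanonCF x A n) {i : ℕ} (hi₁ : 1 ≤ i) (hi : i ≤ n) : 1 ≤ A i := by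
  obtain ⟨j, rfl⟩ : ∃ j, i = j + 1 := ⟨i - 1, by omega⟩
  rw [← hA.1 _ hi]
  exact Int.le_floor.2 (by exact_mod_cast (one_lt_cfIter_succ (hA.2.2 j (by omega))).le)

lemma two_le (hA : IsCanonCF x A n) (hn : 1 ≤ n) : 2 ≤ A n := by
  obtain ⟨j, rfl⟩ : ∃ j, n = j + 1 := ⟨n - 1, by omega⟩
  have h := one_lt_cfIter_succ (hA.2.2 j (by omega))
  rw [hA.cfIter_eq] at h
  have : (1 : ℤ) < A (j + 1) := by exact_mod_cast h
  omega

lemma one_le_of_mem_tail_cfList (hA : IsCanonCF x A n) : ∀ c ∈ (cfList A n).tail, 1 ≤ c :=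
  forall_mem_tail_cfList fun _ hi₁ hi => hA.one_le hi₁ hi

lemma one_le_of_mem_tail_cfListAlt (hA : IsCanonCF x A n) : ∀ c ∈ (cfListAlt A n).tail, 1 ≤ c :=
  forall_mem_tail_cfListAlt le_rfl (fun hn => by linarith [hA.two_le hn])
    fun _ hi₁ hi => hA.one_le hi₁ hi.le

lemma cfEval_cfList (hA : IsCanonCF x A n) : cfEval (cfList A n) = x := by
  rw [cfList_eq_append, cfEval_append_singleton, ← hA.cfIter_eq,
    List.map_congr_left fun i hi => (hA.1 i (List.mem_range.1 hi).le).symm]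
  exact cfEvalTail_map_range_pquot hA.2.2

lemma ra_eq_self {a : ℕ} (hA : IsCanonCF x A n) (ha : 0 < a)
    (hbd : ∀ i, 1 ≤ i → i ≤ n → A i < a) : ra a x = x := by
  rw [ra, dif_neg]
  rintro ⟨i, hi₁, hia⟩
  rcases le_or_gt i n with hi | hi
  · rw [hA.1 i hi] at hia
    exact (hbd i hi₁ hi).not_ge hia
  · rw [pquot, cfIter_eq_zero_of_fract_eq_zero hA.2.1 hi, Int.floor_zero] at hia
    omega

lemma eq_cfList_or_eq_cfListAlt (hA : IsCanonCF x A n) {B : ℕ → ℤ} {m : ℕ}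
    (hB : ∀ i, 1 ≤ i → i ≤ m → 1 ≤ B i) (h : cfEval (cfList B m) = x) :
    cfList B m = cfList A n ∨ cfList B m = cfListAlt A n := by
  by_cases hcan : m = 0 ∨ 2 ≤ B m
  · obtain ⟨rfl, hAB⟩ :=
      hA.unique (h ▸ isCanonCF_cfEval_cfList hB fun hm => hcan.resolve_left (by omega))
    exact Or.inl (cfList_congr fun i hi => (hAB i hi).symm)
  · obtain ⟨k, rfl⟩ : ∃ k, m = k + 1 := ⟨m - 1, by omega⟩
    have hBk : B (k + 1) = 1 := by have := hB (k + 1) (by omega) le_rfl; omega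
    -- `B` with its last two quotients `B k, 1` merged into `B k + 1`
    set B' := Function.update B k (B k + 1) with hB'
    have hsplit : cfList B (k + 1) = (List.range k).map B ++ [B k, 1] := by
      simp [cfList, List.range_succ, hBk]
    have hmerge : cfList B' k = (List.range k).map B ++ [B k + 1] := by
      rw [cfList_eq_append, hB', Function.update_self]
      congr 1
      exact List.map_congr_left fun i hi => Function.update_of_ne (List.mem_range.1 hi).ne _ _
    have hval : cfEval (cfList B' k) = x := by
      rw [hmerge, ← cfEval_append_pair_one, ← hsplit, h]
    have hcan' : IsCanonCF x B' k := by
      rw [← hval]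
      refine isCanonCF_cfEval_cfList (fun i hi₁ hi => ?_) fun hk => ?_
      · rcases hi.lt_or_eq with hi | rfl
        · rw [hB', Function.update_of_ne hi.ne]; exact hB i hi₁ (by omega)
        · rw [hB', Function.update_self]; linarith [hB i hi₁ (by omega)]
      · rw [hB', Function.update_self]; linarith [hB k hk (by omega)]
    obtain ⟨rfl, hAB⟩ := hA.unique hcan'
    right
    rw [hsplit, cfListAlt, hAB n le_rfl, hB', Function.update_self, add_sub_cancel_right]
    congr 1
    exact List.map_congr_left fun i hi => by
      rw [hAB i (List.mem_range.1 hi).le, hB', Function.update_of_ne (List.mem_range.1 hi).ne]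

lemma mem_Icc_cfEvalTail (hA : IsCanonCF x A n) {t : ℝ} (ht : 0 < t) :
    x ∈ if Even n then Icc (cfEvalTail (cfListAlt A n) t) (cfEvalTail (cfList A n) t)
      else Icc (cfEvalTail (cfList A n) t) (cfEvalTail (cfListAlt A n) t) := by
  have h₁ := cfEval_lt_cfEvalTail_iff cfList_ne_nil hA.one_le_of_mem_tail_cfList ht
  have h₂ := cfEval_lt_cfEvalTail_iff cfListAlt_ne_nil hA.one_le_of_mem_tail_cfListAlt ht
  rw [hA.cfEval_cfList, length_cfList, Nat.odd_add_one, Nat.not_odd_iff_even] at h₁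
  rw [cfEval_cfListAlt, hA.cfEval_cfList, length_cfListAlt, Nat.odd_add_one, Nat.odd_add_one,
    not_not] at h₂
  split_ifs with hn
  · exact ⟨not_lt.1 fun h => Nat.not_odd_iff_even.2 hn (h₂.1 h), (h₁.2 hn).le⟩
  · exact ⟨not_lt.1 fun h => hn (h₁.1 h), (h₂.2 (Nat.not_even_iff_odd.1 hn)).le⟩

lemma ra_eq_iff_mem_uIcc {a : ℕ} (ha : 2 ≤ a) (hA : IsCanonCF x A n)
    (hbd : ∀ i, 1 ≤ i → i ≤ n → A i < a) (y : ℝ) :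
    ra a y = x ↔ y ∈ uIcc (cfEvalTail (cfList A n) a) (cfEvalTail (cfListAlt A n) a) := by
  set ν₁ := cfEvalTail (cfList A n) a
  set ν₂ := cfEvalTail (cfListAlt A n) a
  have ha₀ : (0 : ℝ) < a := by exact_mod_cast (by omega : 0 < a)
  have hv₁ : cfEval (cfList A n) = x := hA.cfEval_cfList
  have hv₂ : cfEval (cfListAlt A n) = x := cfEval_cfListAlt.trans hv₁
  have hL₁ : ∀ c ∈ (cfList A n).tail, 1 ≤ c ∧ c < a :=
    forall_mem_tail_cfList fun i hi₁ hi => ⟨hA.one_le hi₁ hi, hbd i hi₁ hi⟩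
  have hL₂ : ∀ c ∈ (cfListAlt A n).tail, 1 ≤ c ∧ c < a :=
    forall_mem_tail_cfListAlt ⟨le_rfl, by omega⟩
      (fun hn => ⟨by linarith [hA.two_le hn], by linarith [hbd n hn le_rfl]⟩)
      fun i hi₁ hi => ⟨hA.one_le hi₁ hi.le, hbd i hi₁ hi.le⟩
  have hx : x ∈ uIcc ν₁ ν₂ := by
    have h := hA.mem_Icc_cfEvalTail ha₀
    split_ifs at h
    · exact Icc_subset_uIcc' h
    · exact Icc_subset_uIcc h
  constructor
  · intro hy
    rcases ra_eq_self_or_exists (by omega : 0 < a) y with hyy | ⟨m, hm, hym, hmem⟩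
    · exact hyy ▸ hy ▸ hx
    · rcases hA.eq_cfList_or_eq_cfListAlt hm (hym.symm.trans hy) with h | h <;> rw [h] at hmem
      · rw [cfEvalTail_image_Ici cfList_ne_nil (fun c hc => (hL₁ c hc).1) ha₀, hv₁] at hmem
        exact uIcc_subset_uIcc hx left_mem_uIcc hmem.1
      · rw [cfEvalTail_image_Ici cfListAlt_ne_nil (fun c hc => (hL₂ c hc).1) ha₀, hv₂] at hmem
        exact uIcc_subset_uIcc hx right_mem_uIcc hmem.1
  · intro hy
    by_cases hyx : y = x
    · exact hyx ▸ hA.ra_eq_self (by omega) hbd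
    rcases uIcc_subset_uIcc_union_uIcc (b := x) hy with hy | hy
    · rw [uIcc_comm, ← hv₁] at hy
      exact hv₁ ▸ ra_eq_of_mem_uIcc ha cfList_ne_nil hL₁ hy (hv₁ ▸ hyx)
    · rw [← hv₂] at hy
      exact hv₂ ▸ ra_eq_of_mem_uIcc ha cfListAlt_ne_nil hL₂ hy (hv₂ ▸ hyx)

lemma uIcc_subset_Ico {a : ℕ} (ha : 2 ≤ a) (hA : IsCanonCF x A n) (hx : 0 < x) (hA₀ : A 0 < a) :
    uIcc (cfEvalTail (cfList A n) a) (cfEvalTail (cfListAlt A n) a) ⊆ Ico 0 (a : ℝ) := by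
  have ha₁ : (1 : ℝ) < a := by exact_mod_cast (by omega : 1 < a)
  have hmem : ∀ M : List ℤ, (hne : 0 < M.length) → (∀ c ∈ M.tail, 1 ≤ c) → 0 ≤ M[0] → M[0] < a →
      cfEvalTail M a ∈ Ico 0 (a : ℝ) := by
    intro M hne hM h₀ h₁
    have h := Int.floor_eq_iff.1 (floor_cfEvalTail hM ha₁ hne)
    have h₀' : (0 : ℝ) ≤ M[0] := by exact_mod_cast h₀
    have h₁' : (M[0] : ℝ) + 1 ≤ a := by exact_mod_cast h₁
    exact ⟨h₀'.trans h.1, h.2.trans_le h₁'⟩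
  have hA₀' : 0 ≤ A 0 := by
    rw [← hA.1 0 (Nat.zero_le n)]
    exact Int.floor_nonneg.2 hx.le
  have hhead : 0 ≤ (cfListAlt A n)[0]'(by simp) ∧ (cfListAlt A n)[0]'(by simp) < a := by
    cases n with
    | zero =>
      have : (0 : ℝ) < A 0 := hA.cfIter_eq ▸ hx
      have : 0 < A 0 := by exact_mod_cast this
      simp only [cfListAlt, List.range_zero, List.map_nil, List.nil_append, List.getElem_cons_zero]
      omega
    | succ n => simpa [cfListAlt] using ⟨hA₀', hA₀⟩
  exact ordConnected_Ico.uIcc_subset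
    (hmem _ (by simp) hA.one_le_of_mem_tail_cfList (by simpa using hA₀') (by simpa using hA₀))
    (hmem _ (by simp) hA.one_le_of_mem_tail_cfListAlt hhead.1 hhead.2)

end IsCanonCF

theorem stmt_2_general (a : ℕ) (ha : 2 ≤ a) (x : ℚ) (hx0 : 0 < (x : ℝ))
    (n : ℕ) (A : ℕ → ℤ) (hA : IsCanonCF (x : ℝ) A n)
    (hbd : ∀ i ≤ n, A i ≤ (a : ℤ) - 1) :
    (lockZone a (x : ℝ) =
      if Even n then
        Set.Icc (cfEval ((List.range n).map A ++ [A n - 1, 1, (a : ℤ)]))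
          (cfEval ((List.range (n + 1)).map A ++ [(a : ℤ)]))
      else
        Set.Icc (cfEval ((List.range (n + 1)).map A ++ [(a : ℤ)]))
          (cfEval ((List.range n).map A ++ [A n - 1, 1, (a : ℤ)]))) ∧
    ∀ y ∈ Set.uIcc (cfEval ((List.range (n + 1)).map A ++ [(a : ℤ)]))
        (cfEval ((List.range n).map A ++ [A n - 1, 1, (a : ℤ)])),
      ra a y = (x : ℝ) := by
  have ha₀ : (0 : ℝ) < a := by exact_mod_cast (by omega : 0 < a)
  have hzone := hA.ra_eq_iff_mem_uIcc ha fun i _ hi => by linarith [hbd i hi]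
  have hν₁ : cfEval ((List.range (n + 1)).map A ++ [(a : ℤ)]) = cfEvalTail (cfList A n) a := by
    rw [cfEval_append_singleton, Int.cast_natCast]
    rfl
  have hν₂ : cfEval ((List.range n).map A ++ [A n - 1, 1, (a : ℤ)]) =
      cfEvalTail (cfListAlt A n) a := by
    rw [show (List.range n).map A ++ [A n - 1, 1, (a : ℤ)] = cfListAlt A n ++ [(a : ℤ)] by
      simp [cfListAlt], cfEval_append_singleton, Int.cast_natCast]
  have horient : uIcc (cfEvalTail (cfList A n) a) (cfEvalTail (cfListAlt A n) a) =
      if Even n then Icc (cfEvalTail (cfListAlt A n) a) (cfEvalTail (cfList A n) a)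
      else Icc (cfEvalTail (cfList A n) a) (cfEvalTail (cfListAlt A n) a) := by
    have h := hA.mem_Icc_cfEvalTail ha₀
    split_ifs at h ⊢
    · exact uIcc_of_ge (h.1.trans h.2)
    · exact uIcc_of_le (h.1.trans h.2)
  rw [hν₁, hν₂, ← horient]
  refine ⟨?_, fun y hy => (hzone y).2 hy⟩
  ext y
  simp only [lockZone, mem_ofPred_eq, hzone]
  exact ⟨And.right, fun hy =>
    ⟨hA.uIcc_subset_Ico ha hx0 (by linarith [hbd 0 (Nat.zero_le n)]) hy, hy⟩⟩

/-- The locking zone of a rational `p/q = [a₀; a₁, …, aₙ]` with all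
partial quotients `≤ a - 1` is the closed interval with endpoints
`[a₀; a₁, …, aₙ, a]` and `[a₀; a₁, …, aₙ - 1, 1, a]`, the former being the right
endpoint exactly when `n` is even; and `r_a` equals `p/q` on this interval. -/
theorem stmt_2 (a : ℕ) (ha : 2 ≤ a) (x : ℚ) (hx0 : 0 < (x : ℝ)) (hxa : (x : ℝ) < a)
    (n : ℕ) (A : ℕ → ℤ) (hA : IsCanonCF (x : ℝ) A n)
    (hbd : ∀ i ≤ n, A i ≤ (a : ℤ) - 1) :
    (lockZone a (x : ℝ) =
      if Even n then
        Set.Icc (cfEval ((List.range n).map A ++ [A n - 1, 1, (a : ℤ)]))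
          (cfEval ((List.range (n + 1)).map A ++ [(a : ℤ)]))
      else
        Set.Icc (cfEval ((List.range (n + 1)).map A ++ [(a : ℤ)]))
          (cfEval ((List.range n).map A ++ [A n - 1, 1, (a : ℤ)]))) ∧
    ∀ y ∈ Set.uIcc (cfEval ((List.range (n + 1)).map A ++ [(a : ℤ)]))
        (cfEval ((List.range n).map A ++ [A n - 1, 1, (a : ℤ)])),
      ra a y = (x : ℝ) :=
  stmt_2_general a ha x hx0 n A hA hbd
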